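/- arXiv:math/0504450 — 4 statements merged into one kernel-verified Lean document; each statement's English description precedes it below -/
import Mathlib

section
/- For all real numbers a and b, |arctan a − arctan b| · a² ≤ 4π(|a| + |b|) · |a − b|. -/
lemma arctan_mvt_aux {a b : ℝ} (hlt : a < b) :
    ∃ c : ℝ, a < c ∧ c < b ∧
      (Real.arctan b - Real.arctan a) * (1 + c ^ 2) = b - a := by
  obtain ⟨c, hc, hceq⟩ := exists_hasDerivAt_eq_slope Real.arctan
    (fun x => 1 / (1 + x ^ 2)) hlt Real.continuous_arctan.continuousOn
    (fun x _ => by simpa [sq] using Real.hasDerivAt_arctan x)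
  refine ⟨c, hc.1, hc.2, ?_⟩
  have hpos : (0:ℝ) < 1 + c ^ 2 := by positivity
  have hba : b - a ≠ 0 := by linarith [hlt]
  field_simp at hceq
  linarith

lemma arctan_mvt {a b : ℝ} (h : a ≠ b) :
    ∃ c : ℝ, |c - a| ≤ |a - b| ∧
      |Real.arctan a - Real.arctan b| * (1 + c ^ 2) = |a - b| := by
  rcases lt_or_gt_of_ne h with hlt | hgt
  · obtain ⟨c, h1, h2, heq⟩ := arctan_mvt_aux hlt
    have harc : Real.arctan a < Real.arctan b := Real.arctan_strictMono hlt
    refine ⟨c, ?_, ?_⟩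
    · rw [abs_of_nonneg (by linarith), abs_of_nonpos (by linarith)]; linarith
    · rw [abs_of_nonpos (by linarith), abs_of_nonpos (by linarith)]
      nlinarith [heq]
  · obtain ⟨c, h1, h2, heq⟩ := arctan_mvt_aux hgt
    have harc : Real.arctan b < Real.arctan a := Real.arctan_strictMono hgt
    refine ⟨c, ?_, ?_⟩
    · rw [abs_of_nonpos (by linarith), abs_of_nonneg (by linarith)]; linarith
    · rw [abs_of_nonneg (by linarith), abs_of_nonneg (by linarith)]
      nlinarith [heq]

theorem arctan_diff_sq_bound (a b : ℝ) :
    |Real.arctan a - Real.arctan b| * a ^ 2 ≤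
      4 * Real.pi * (|a| + |b|) * |a - b| := by
  rcases eq_or_ne a b with rfl | hne
  · simp [abs_nonneg]
  have hpi : (3:ℝ) < Real.pi := Real.pi_gt_three
  have hab0 : (0:ℝ) < |a - b| := abs_pos.mpr (sub_ne_zero.mpr hne)
  have ha0 : (0:ℝ) ≤ |a| := abs_nonneg a
  have hb0 : (0:ℝ) ≤ |b| := abs_nonneg b
  have haa : |a| ^ 2 = a ^ 2 := sq_abs a
  obtain ⟨c, hca, heq⟩ := arctan_mvt hne
  have hc1 : (0:ℝ) < 1 + c ^ 2 := by positivity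
  have hdpos : (0:ℝ) ≤ |Real.arctan a - Real.arctan b| := abs_nonneg _
  have hlip : |Real.arctan a - Real.arctan b| ≤ |a - b| := by nlinarith
  have hdpi : |Real.arctan a - Real.arctan b| ≤ Real.pi := by
    have h1 : |Real.arctan a| ≤ Real.pi / 2 :=
      le_of_lt (abs_lt.mpr ⟨Real.neg_pi_div_two_lt_arctan a, Real.arctan_lt_pi_div_two a⟩)
    have h2 : |Real.arctan b| ≤ Real.pi / 2 :=
      le_of_lt (abs_lt.mpr ⟨Real.neg_pi_div_two_lt_arctan b, Real.arctan_lt_pi_div_two b⟩)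
    calc |Real.arctan a - Real.arctan b| ≤ |Real.arctan a| + |Real.arctan b| := abs_sub _ _
      _ ≤ Real.pi := by linarith
  by_cases hcase : |a| < 1
  · have h1 : a ^ 2 ≤ |a| := by nlinarith [sq_abs a]
    nlinarith [mul_le_mul_of_nonneg_right hlip (sq_nonneg a), sq_nonneg a,
      mul_le_mul_of_nonneg_left h1 (le_of_lt hab0),
      mul_nonneg (mul_nonneg (le_of_lt hab0) ha0) (show (0:ℝ) ≤ 4 * Real.pi - 1 by linarith),
      mul_nonneg (mul_nonneg (le_of_lt hab0) hb0) (show (0:ℝ) ≤ 4 * Real.pi by linarith)]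
  · have hx1 : (1:ℝ) ≤ |a| := not_lt.mp hcase
    by_cases hcase2 : |a| ≤ 2 * |a - b|
    · calc |Real.arctan a - Real.arctan b| * a ^ 2
          ≤ Real.pi * a ^ 2 := mul_le_mul_of_nonneg_right hdpi (sq_nonneg a)
        _ = Real.pi * (|a| * |a|) := by rw [← haa]; ring
        _ ≤ Real.pi * (|a| * (2 * |a - b|)) := by
            refine mul_le_mul_of_nonneg_left ?_ Real.pi_pos.le
            exact mul_le_mul_of_nonneg_left hcase2 ha0
        _ ≤ 4 * Real.pi * (|a| + |b|) * |a - b| := by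
            nlinarith [mul_nonneg (mul_nonneg Real.pi_pos.le ha0) (le_of_lt hab0),
              mul_nonneg (mul_nonneg Real.pi_pos.le hb0) (le_of_lt hab0)]
    · push_neg at hcase2
      have h5 : |a| - |a - b| ≤ |c| := by
        have h7 : |a| - |c| ≤ |c - a| := by
          calc |a| - |c| ≤ |(|a| - |c|)| := le_abs_self _
            _ = |(|c| - |a|)| := abs_sub_comm _ _
            _ ≤ |c - a| := abs_abs_sub_abs_le_abs_sub c a
        linarith
      have hcbig : a ^ 2 ≤ 4 * c ^ 2 := by
        nlinarith [sq_abs c, sq_abs a, abs_nonneg c, hca,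
          mul_self_le_mul_self (show (0:ℝ) ≤ |a| - |a - b| by linarith) h5,
          mul_pos (show (0:ℝ) < |a| - 2 * |a - b| by linarith)
            (show (0:ℝ) < 3 * |a| - 2 * |a - b| by linarith)]
      have hmain : |Real.arctan a - Real.arctan b| * a ^ 2 ≤ 4 * |a - b| := by
        nlinarith [heq, hdpos, hcbig]
      have hfin : 4 * |a - b| ≤ 4 * Real.pi * (|a| + |b|) * |a - b| := by
        nlinarith [hpi, hx1, hb0, hab0, mul_nonneg (le_of_lt hab0)
          (show (0:ℝ) ≤ Real.pi * |a| - 1 by nlinarith)]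
      linarith
end

section
/- For all real numbers a and b, |1/(1+a²) − 1/(1+b²)| ≤ |2·arctan a − 2·arctan b|. -/
theorem inv_one_add_sq_diff_le (a b : ℝ) :
    |1 / (1 + a ^ 2) - 1 / (1 + b ^ 2)| ≤
      |2 * Real.arctan a - 2 * Real.arctan b| := by
  have coslip : ∀ x y : ℝ, |Real.cos x - Real.cos y| ≤ |x - y| := by
    intro x y
    rw [Real.cos_sub_cos, abs_mul, abs_mul]
    have h1 : |(-2 : ℝ)| = 2 := by norm_num
    have h2 : |Real.sin ((x + y) / 2)| ≤ 1 := Real.abs_sin_le_one _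
    have h3 : |Real.sin ((x - y) / 2)| ≤ |(x - y) / 2| := Real.abs_sin_le_abs
    have h4 : |(x - y) / 2| = |x - y| / 2 := by rw [abs_div]; norm_num
    have h5 : (0:ℝ) ≤ |Real.sin ((x - y) / 2)| := abs_nonneg _
    have h6 : (0:ℝ) ≤ |Real.sin ((x + y) / 2)| := abs_nonneg _
    rw [h4] at h3
    rw [h1]
    nlinarith [abs_nonneg (x - y)]
  have key : ∀ x : ℝ, 1 / (1 + x ^ 2) = (Real.cos (2 * Real.arctan x) + 1) / 2 := by
    intro x
    rw [Real.cos_two_mul, Real.cos_sq_arctan]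
    ring
  rw [key a, key b]
  have h := coslip (2 * Real.arctan a) (2 * Real.arctan b)
  have heq : (Real.cos (2 * Real.arctan a) + 1) / 2 - (Real.cos (2 * Real.arctan b) + 1) / 2
      = (Real.cos (2 * Real.arctan a) - Real.cos (2 * Real.arctan b)) / 2 := by ring
  rw [heq, abs_div]
  have h0 : (0:ℝ) ≤ |Real.cos (2 * Real.arctan a) - Real.cos (2 * Real.arctan b)| := abs_nonneg _
  rw [abs_two]
  linarith
end

section
/- Let u : ℝ → ℝ be 1-periodic in H¹ and define P(x) = (1/2)∫_ℝ e^{−|x−y|}(u²(y) + u'(y)²/2) dy. Then P is differentiable a.e. with P'(x) = (1/2)∫_ℝ sign(y−x) e^{−|x−y|}(u²(y) + u'(y)²/2) dy, and ‖P'‖_{L∞} ≤ ∫₀¹ (u²(y) + u'(y)²) dy. -/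
/-!
Since `x ↦ e^{-|x-y|}` is Lipschitz on `|x - x₀| < 1` with constant `e · e^{-|x₀-y|}`, which is
integrable against the density `f = u² + u'²/2`, and is differentiable away from the null set
`y = x₀`, one may differentiate `P` under the integral sign at every point.

For the bound, `∫ sign(y-x) e^{-|x-y|} f` is the difference `R - L` of the two nonnegative tails
`R = ∫_{y>x} e^{x-y} f` and `L = ∫_{y<x} e^{y-x} f`. Periodicity gives
`R = ∫_x^{x+1} e^{x-y} f + e^{-1} R`, hence `R ≤ (1 - e^{-1})⁻¹ ∫_0^1 f ≤ 2 ∫_0^1 f`, and the same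
holds for `L` after reflecting `y ↦ -y`. So `|P'| ≤ ½ max(R, L) ≤ ∫_0^1 f ≤ ∫_0^1 (u² + u'²)`.
-/

open MeasureTheory Set Filter Topology Real

theorem Real.measurable_sign : Measurable Real.sign :=
  Measurable.ite measurableSet_Iio measurable_const
    (Measurable.ite measurableSet_Ioi measurable_const measurable_const)

theorem measurable_of_forall_hasDerivAt {u u' : ℝ → ℝ} (h : ∀ x, HasDerivAt u (u' x) x) :
    Measurable u' := by
  rw [show u' = deriv u from funext fun x => (h x).deriv.symm]
  exact measurable_deriv u

theorem Real.abs_exp_sub_exp_le {a b c : ℝ} (ha : a ≤ c) (hb : b ≤ c) :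
    |exp a - exp b| ≤ exp c * |a - b| := by
  wlog hba : b ≤ a generalizing a b
  · rw [abs_sub_comm, abs_sub_comm a]
    exact this hb ha (le_of_not_ge hba)
  have hexp : exp a * (b - a + 1) ≤ exp b := by
    calc exp a * (b - a + 1) ≤ exp a * exp (b - a) := by gcongr; exact add_one_le_exp _
      _ = exp b := by rw [← exp_add]; ring_nf
  rw [abs_of_nonneg (sub_nonneg.2 (exp_le_exp.2 hba)), abs_of_nonneg (sub_nonneg.2 hba)]
  nlinarith [exp_le_exp.2 ha]

theorem abs_exp_neg_abs_sub_sub_le {x₀ x₁ x₂ : ℝ} (h₁ : |x₁ - x₀| < 1) (h₂ : |x₂ - x₀| < 1)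
    (y : ℝ) :
    |exp (-|x₁ - y|) - exp (-|x₂ - y|)| ≤ exp 1 * exp (-|x₀ - y|) * |x₁ - x₂| := by
  have hle : ∀ x, |x - x₀| < 1 → -|x - y| ≤ 1 - |x₀ - y| := fun x hx => by
    have := abs_sub_le x₀ x y
    rw [abs_sub_comm x₀ x] at this
    linarith
  calc |exp (-|x₁ - y|) - exp (-|x₂ - y|)|
      ≤ exp (1 - |x₀ - y|) * |(-|x₁ - y|) - (-|x₂ - y|)| :=
        abs_exp_sub_exp_le (hle x₁ h₁) (hle x₂ h₂)
    _ ≤ exp (1 - |x₀ - y|) * |x₁ - x₂| := by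
        refine mul_le_mul_of_nonneg_left ?_ (exp_nonneg _)
        rw [neg_sub_neg, abs_sub_comm, ← sub_sub_sub_cancel_right x₁ x₂ y]
        exact abs_abs_sub_abs_le_abs_sub _ _
    _ = exp 1 * exp (-|x₀ - y|) * |x₁ - x₂| := by rw [sub_eq_add_neg, exp_add]

theorem hasDerivAt_exp_neg_abs_sub {x y : ℝ} (h : y ≠ x) :
    HasDerivAt (fun z => exp (-|z - y|)) (Real.sign (y - x) * exp (-|x - y|)) x := by
  have hsub := (hasDerivAt_id x).sub_const y
  have habs : HasDerivAt (fun z => |z - y|) (-Real.sign (y - x)) x := by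
    rcases h.lt_or_gt with hyx | hxy
    · rw [Real.sign_of_neg (sub_neg.2 hyx)]
      simpa [Function.comp_def] using (hasDerivAt_abs_pos (sub_pos.2 hyx)).comp x hsub
    · rw [Real.sign_of_pos (sub_pos.2 hxy)]
      simpa [Function.comp_def] using (hasDerivAt_abs_neg (sub_neg.2 hxy)).comp x hsub
  have hexp := habs.neg.exp
  rw [neg_neg, mul_comm] at hexp
  exact hexp

theorem hasDerivAt_integral_exp_neg_abs_sub_mul {f : ℝ → ℝ} (hf : AEStronglyMeasurable f)
    {x₀ : ℝ} (hint : Integrable (fun y => exp (-|x₀ - y|) * f y)) :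
    HasDerivAt (fun x => ∫ y, exp (-|x - y|) * f y)
      (∫ y, Real.sign (y - x₀) * exp (-|x₀ - y|) * f y) x₀ := by
  have hK : ∀ x, Continuous fun y : ℝ => exp (-|x - y|) := fun x => by fun_prop
  refine (hasDerivAt_integral_of_dominated_loc_of_lip (Metric.ball_mem_nhds x₀ one_pos)
    (bound := fun y => exp 1 * (exp (-|x₀ - y|) * f y))
    (Eventually.of_forall fun x => (hK x).aestronglyMeasurable.mul hf) hint ?_ ?_
    (hint.const_mul _) ?_).2
  · exact ((Real.measurable_sign.comp (measurable_id.sub_const x₀)).aestronglyMeasurable.mul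
      (hK x₀).aestronglyMeasurable).mul hf
  · refine Eventually.of_forall fun y => LipschitzOnWith.of_dist_le_mul fun x₁ h₁ x₂ h₂ => ?_
    rw [Metric.mem_ball, Real.dist_eq] at h₁ h₂
    rw [Real.dist_eq, Real.dist_eq, Real.coe_nnabs]
    calc |exp (-|x₁ - y|) * f y - exp (-|x₂ - y|) * f y|
        = |exp (-|x₁ - y|) - exp (-|x₂ - y|)| * |f y| := by rw [← sub_mul, abs_mul]
      _ ≤ exp 1 * exp (-|x₀ - y|) * |x₁ - x₂| * |f y| := by
          gcongr
          exact abs_exp_neg_abs_sub_sub_le h₁ h₂ y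
      _ = |exp 1 * (exp (-|x₀ - y|) * f y)| * |x₁ - x₂| := by
          rw [abs_mul, abs_mul, abs_of_pos (exp_pos 1), abs_of_pos (exp_pos _)]
          ring
  · filter_upwards [Measure.ae_ne volume x₀] with y hy
    exact (hasDerivAt_exp_neg_abs_sub hy).mul_const (f y)

theorem integral_Ioi_comp_add_right {E : Type*} [NormedAddCommGroup E] [NormedSpace ℝ E]
    (f : ℝ → E) (a c : ℝ) : ∫ x in Ioi a, f (x + c) = ∫ x in Ioi (a + c), f x := by
  have := (measurableEmbedding_addRight c).setIntegral_map (μ := volume) f (Ioi (a + c))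
  rw [map_add_right_eq_self, preimage_add_const_Ioi, add_sub_cancel_right] at this
  exact this.symm

theorem Function.Periodic.integral_Ioi_exp_sub_mul {f : ℝ → ℝ} {T : ℝ}
    (hf : Function.Periodic f T) (hT : 0 ≤ T) {x : ℝ}
    (hint : IntegrableOn (fun y => exp (x - y) * f y) (Ioi x)) :
    (1 - exp (-T)) * ∫ y in Ioi x, exp (x - y) * f y = ∫ y in x..x + T, exp (x - y) * f y := by
  have htail : ∫ y in Ioi (x + T), exp (x - y) * f y =
      exp (-T) * ∫ y in Ioi x, exp (x - y) * f y := by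
    rw [← integral_Ioi_comp_add_right, ← integral_const_mul]
    refine setIntegral_congr_fun measurableSet_Ioi fun y _ => ?_
    rw [hf y, ← mul_assoc, ← exp_add]
    ring_nf
  have hsplit := intervalIntegral.integral_interval_add_Ioi hint
    (hint.mono_set (Ioi_subset_Ioi (le_add_of_nonneg_right hT)))
  rw [htail] at hsplit
  linear_combination -hsplit

theorem intervalIntegrable_of_integrable_exp_neg_abs_sub_mul {f : ℝ → ℝ} {x : ℝ}
    (hint : Integrable (fun y => exp (-|x - y|) * f y)) (a b : ℝ) :
    IntervalIntegrable f volume a b := by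
  refine IntegrableOn.intervalIntegrable ?_
  have := hint.integrableOn.continuousOn_mul (g := fun y => exp |x - y|)
    (by fun_prop) (isCompact_uIcc (a := a) (b := b))
  refine this.congr_fun (fun y _ => ?_) measurableSet_uIcc
  simp [← mul_assoc, ← exp_add]

theorem Function.Periodic.integral_Ioi_exp_sub_mul_le {f : ℝ → ℝ} {T : ℝ}
    (hf : Function.Periodic f T) (hT : 0 < T) (hf0 : 0 ≤ f) {x : ℝ}
    (hint : Integrable (fun y => exp (-|x - y|) * f y)) :
    ∫ y in Ioi x, exp (x - y) * f y ≤ (1 - exp (-T))⁻¹ * ∫ y in x..x + T, f y := by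
  have hIoi : IntegrableOn (fun y => exp (x - y) * f y) (Ioi x) :=
    hint.integrableOn.congr_fun (fun y (hy : x < y) => by
      dsimp only
      rw [abs_of_neg (sub_neg.2 hy), neg_neg]) measurableSet_Ioi
  have hxT : x ≤ x + T := le_add_of_nonneg_right hT.le
  rw [le_inv_mul_iff₀ (sub_pos.2 (exp_lt_one_iff.2 (neg_neg_of_pos hT))),
    hf.integral_Ioi_exp_sub_mul hT.le hIoi]
  refine intervalIntegral.integral_mono_on hxT
    ((intervalIntegrable_iff_integrableOn_Ioc_of_le hxT).2 (hIoi.mono_set Ioc_subset_Ioi_self))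
    (intervalIntegrable_of_integrable_exp_neg_abs_sub_mul hint _ _) fun y hy => ?_
  exact mul_le_of_le_one_left (hf0 y) (exp_le_one_iff.2 (sub_nonpos.2 hy.1))

theorem integral_sign_mul_exp_neg_abs_sub_mul {f : ℝ → ℝ} {x : ℝ}
    (hint : Integrable (fun y => exp (-|x - y|) * f y)) :
    ∫ y, Real.sign (y - x) * exp (-|x - y|) * f y =
      (∫ y in Ioi x, exp (x - y) * f y) - ∫ y in Iic x, exp (y - x) * f y := by
  have hsign : Integrable (fun y => Real.sign (y - x) * exp (-|x - y|) * f y) := by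
    simp_rw [mul_assoc]
    refine hint.bdd_mul (c := 1)
      (Real.measurable_sign.comp (measurable_id.sub_const x)).aestronglyMeasurable
      (Eventually.of_forall fun y => ?_)
    rcases Real.sign_apply_eq (y - x) with h | h | h <;> simp [h]
  have hIoi : ∫ y in Ioi x, Real.sign (y - x) * exp (-|x - y|) * f y =
      ∫ y in Ioi x, exp (x - y) * f y := by
    refine setIntegral_congr_fun measurableSet_Ioi fun y (hy : x < y) => ?_
    simp [Real.sign_of_pos (sub_pos.2 hy), abs_of_neg (sub_neg.2 hy)]
  have hIic : ∫ y in Iic x, Real.sign (y - x) * exp (-|x - y|) * f y =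
      -∫ y in Iic x, exp (y - x) * f y := by
    rw [integral_Iic_eq_integral_Iio, integral_Iic_eq_integral_Iio, ← integral_neg]
    refine setIntegral_congr_fun measurableSet_Iio fun y (hy : y < x) => ?_
    simp [Real.sign_of_neg (sub_neg.2 hy), abs_of_pos (sub_pos.2 hy)]
  rw [← intervalIntegral.integral_Iic_add_Ioi (b := x) hsign.integrableOn hsign.integrableOn,
    hIic, hIoi, neg_add_eq_sub]

theorem Function.Periodic.abs_integral_sign_mul_exp_neg_abs_sub_mul_le {f : ℝ → ℝ} {T : ℝ}
    (hf : Function.Periodic f T) (hT : 0 < T) (hf0 : 0 ≤ f) {x : ℝ}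
    (hint : Integrable (fun y => exp (-|x - y|) * f y)) :
    |∫ y, Real.sign (y - x) * exp (-|x - y|) * f y| ≤
      (1 - exp (-T))⁻¹ * ∫ y in x..x + T, f y := by
  have hright := hf.integral_Ioi_exp_sub_mul_le hT hf0 hint
  have hleft : ∫ y in Iic x, exp (y - x) * f y ≤ (1 - exp (-T))⁻¹ * ∫ y in x..x + T, f y := by
    have hf_neg : Function.Periodic (fun z => f (-z)) T := fun z => by
      simp only [neg_add, ← sub_eq_add_neg, hf.sub_eq]
    have hint_neg : Integrable (fun z => exp (-|-x - z|) * f (-z)) := by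
      refine hint.comp_neg.congr (Eventually.of_forall fun z => ?_)
      simp only
      rw [show x - -z = -(-x - z) by ring, abs_neg]
    have := hf_neg.integral_Ioi_exp_sub_mul_le hT (fun z => hf0 (-z)) hint_neg
    have hL : ∫ z in Ioi (-x), exp (-x - z) * f (-z) = ∫ y in Iic x, exp (y - x) * f y := by
      have hrefl := integral_comp_neg_Ioi (-x) (fun y => exp (y - x) * f y)
      rw [neg_neg] at hrefl
      rw [← hrefl]
      refine setIntegral_congr_fun measurableSet_Ioi fun z _ => ?_
      ring_nf
    have hR : ∫ y in -(-x + T)..-(-x), f y = ∫ y in x..x + T, f y := by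
      rw [neg_add, neg_neg, ← sub_eq_add_neg, ← hf.intervalIntegral_add_eq (x - T) x,
        sub_add_cancel]
    rwa [intervalIntegral.integral_comp_neg (fun y => f y), hR, hL] at this
  rw [integral_sign_mul_exp_neg_abs_sub_mul hint]
  have hright0 : 0 ≤ ∫ y in Ioi x, exp (x - y) * f y :=
    setIntegral_nonneg measurableSet_Ioi fun y _ => mul_nonneg (exp_nonneg _) (hf0 y)
  have hleft0 : 0 ≤ ∫ y in Iic x, exp (y - x) * f y :=
    setIntegral_nonneg measurableSet_Iic fun y _ => mul_nonneg (exp_nonneg _) (hf0 y)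
  exact abs_le.2 ⟨by linarith, by linarith⟩

theorem Function.Periodic.abs_integral_sign_mul_exp_neg_abs_sub_mul_le_two_mul {f : ℝ → ℝ}
    (hf : Function.Periodic f 1) (hf0 : 0 ≤ f) {x : ℝ}
    (hint : Integrable (fun y => exp (-|x - y|) * f y)) :
    |∫ y, Real.sign (y - x) * exp (-|x - y|) * f y| ≤ 2 * ∫ y in (0:ℝ)..1, f y := by
  refine (hf.abs_integral_sign_mul_exp_neg_abs_sub_mul_le one_pos hf0 hint).trans ?_
  rw [hf.intervalIntegral_add_eq x 0, zero_add]
  refine mul_le_mul_of_nonneg_right ?_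
    (intervalIntegral.integral_nonneg zero_le_one fun y _ => hf0 y)
  exact inv_le_of_inv_le₀ two_pos (by linarith [exp_neg_one_lt_half])

theorem source_term_deriv_bound (u u' P P' : ℝ → ℝ)
    (hper : Function.Periodic u 1) (hper' : Function.Periodic u' 1)
    (hderiv : ∀ x, HasDerivAt u (u' x) x)
    (hint : ∀ x, Integrable (fun y =>
      Real.exp (-|x - y|) * ((u y) ^ 2 + (u' y) ^ 2 / 2)))
    (hP : ∀ x, P x = (1 / 2) * ∫ y : ℝ,
      Real.exp (-|x - y|) * ((u y) ^ 2 + (u' y) ^ 2 / 2))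
    (hP' : ∀ x, P' x = (1 / 2) * ∫ y : ℝ,
      Real.sign (y - x) * Real.exp (-|x - y|) * ((u y) ^ 2 + (u' y) ^ 2 / 2)) :
    (∀ᵐ x : ℝ, HasDerivAt P (P' x) x) ∧
    (∀ x, |P' x| ≤ ∫ y in (0:ℝ)..1, ((u y) ^ 2 + (u' y) ^ 2)) := by
  set f : ℝ → ℝ := fun y => u y ^ 2 + u' y ^ 2 / 2
  have hu : Continuous u := continuous_iff_continuousAt.2 fun x => (hderiv x).continuousAt
  have hu' := measurable_of_forall_hasDerivAt hderiv
  have hf_meas : AEStronglyMeasurable f := by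
    have := hu.measurable
    fun_prop
  have hf_per : Function.Periodic f 1 := fun y => by simp only [f, hper y, hper' y]
  have hf0 : 0 ≤ f := fun y => by positivity
  refine ⟨Eventually.of_forall fun x => ?_, fun x => ?_⟩
  · rw [funext hP, hP' x]
    exact (hasDerivAt_integral_exp_neg_abs_sub_mul hf_meas (hint x)).const_mul _
  have hf_int := intervalIntegrable_of_integrable_exp_neg_abs_sub_mul (hint 0) 0 1
  have hg_int : IntervalIntegrable (fun y => u y ^ 2 + u' y ^ 2) volume 0 1 := by
    convert (hf_int.const_mul 2).sub ((hu.pow 2).intervalIntegrable 0 1) using 1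
    funext y
    rw [Pi.pow_apply]
    ring
  calc |P' x| = 1 / 2 * |∫ y, Real.sign (y - x) * exp (-|x - y|) * f y| := by
        rw [hP' x, abs_mul, abs_of_pos one_half_pos]
    _ ≤ 1 / 2 * (2 * ∫ y in (0:ℝ)..1, f y) := by
        gcongr
        exact hf_per.abs_integral_sign_mul_exp_neg_abs_sub_mul_le_two_mul hf0 (hint x)
    _ = ∫ y in (0:ℝ)..1, f y := by ring
    _ ≤ ∫ y in (0:ℝ)..1, (u y ^ 2 + u' y ^ 2) :=
        intervalIntegral.integral_mono_on zero_le_one hf_int hg_int fun y _ => by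
          simp only [f]
          linarith [sq_nonneg (u' y)]
end

section
/- The Hamiltonian H(p,q) = (1/2) Σ_{i,j} pᵢ pⱼ e^{−|qᵢ−qⱼ|} is constant along solutions of the multi-peakon ODE system: q̇ᵢ = Σⱼ pⱼ e^{−|qᵢ−qⱼ|}, ṗᵢ = Σ_{j≠i} pᵢ pⱼ sign(qᵢ−qⱼ) e^{−|qᵢ−qⱼ|}, as long as the positions qᵢ(t) remain pairwise distinct. -/
/-! Write `E i j = exp (-|qᵢ - qⱼ|)` and `A i j = sign (qᵢ - qⱼ) * E i j`, so that
`q̇ᵢ = ∑ⱼ pⱼ E i j` and `ṗᵢ = ∑ⱼ pᵢ pⱼ A i j` (the diagonal terms vanish since `sign 0 = 0`).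
Away from collisions `d/dt E i j = -A i j (q̇ᵢ - q̇ⱼ)`, so
`d/dt ∑ᵢⱼ pᵢ pⱼ E i j = ∑ᵢⱼ (ṗᵢ pⱼ + pᵢ ṗⱼ) E i j - ∑ᵢⱼ pᵢ pⱼ A i j (q̇ᵢ - q̇ⱼ)`.
As `E` is symmetric and `A` antisymmetric, both double sums equal `2 ∑ᵢ ṗᵢ q̇ᵢ`. -/

open Finset

theorem Real.coe_signType_sign (x : ℝ) : (SignType.sign x : ℝ) = Real.sign x := by
  rcases lt_trichotomy x 0 with hx | rfl | hx
  · simp [hx, Real.sign_of_neg]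
  · simp
  · simp [hx, Real.sign_of_pos]

theorem HasDerivAt.exp_neg_abs_sub {f g : ℝ → ℝ} {f' g' t : ℝ} (hf : HasDerivAt f f' t)
    (hg : HasDerivAt g g' t) (hfg : f t ≠ g t) :
    HasDerivAt (fun s => Real.exp (-|f s - g s|))
      (-(Real.sign (f t - g t) * Real.exp (-|f t - g t|) * (f' - g'))) t := by
  have habs : HasDerivAt (fun s => |f s - g s|) (SignType.sign (f t - g t) * (f' - g')) t :=
    (hasDerivAt_abs (sub_ne_zero.2 hfg)).comp t (hf.sub hg) |>.congr_of_eventuallyEq .rfl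
  rw [Real.coe_signType_sign] at habs
  convert habs.fun_neg.exp using 1
  ring

namespace Multipeakon

variable {ι : Type*} [Fintype ι]

theorem sum_sum_mul_add_mul_of_symm (x y : ι → ℝ) (K : ι → ι → ℝ)
    (hK : ∀ i j, K j i = K i j) :
    ∑ i, ∑ j, (x i * y j + y i * x j) * K i j = 2 * ∑ i, x i * ∑ j, y j * K i j := by
  have hswap : ∑ i, ∑ j, y i * x j * K i j = ∑ i, ∑ j, x i * y j * K i j := by
    rw [sum_comm]
    exact sum_congr rfl fun i _ => sum_congr rfl fun j _ => by rw [hK]; ring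
  calc ∑ i, ∑ j, (x i * y j + y i * x j) * K i j
      = ∑ i, ∑ j, x i * y j * K i j + ∑ i, ∑ j, y i * x j * K i j := by
        simp only [add_mul, sum_add_distrib]
    _ = 2 * ∑ i, ∑ j, x i * y j * K i j := by rw [hswap]; ring
    _ = 2 * ∑ i, x i * ∑ j, y j * K i j := by simp only [mul_sum, mul_assoc]

theorem sum_sum_mul_sub_of_antisymm (x v : ι → ℝ) (A : ι → ι → ℝ)
    (hA : ∀ i j, A j i = -A i j) :
    ∑ i, ∑ j, x i * x j * A i j * (v i - v j) = 2 * ∑ i, (∑ j, x i * x j * A i j) * v i := by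
  have hswap : ∑ i, ∑ j, x i * x j * A i j * v j = -∑ i, ∑ j, x i * x j * A i j * v i := by
    rw [sum_comm, ← sum_neg_distrib]
    refine sum_congr rfl fun j _ => ?_
    rw [← sum_neg_distrib]
    exact sum_congr rfl fun i _ => by rw [hA]; ring
  simp only [mul_sub, sum_sub_distrib, hswap, sum_mul]
  ring

theorem hasDerivAt_hamiltonian_eq_zero {p q : ℝ → ι → ℝ} {t : ℝ}
    (hq : ∀ i, HasDerivAt (fun s => q s i) (∑ j, p t j * Real.exp (-|q t i - q t j|)) t)
    (hp : ∀ i, HasDerivAt (fun s => p s i)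
      (∑ j, p t i * p t j * Real.sign (q t i - q t j) * Real.exp (-|q t i - q t j|)) t)
    (hdistinct : Pairwise fun i j => q t i ≠ q t j) :
    HasDerivAt (fun s => ∑ i, ∑ j, p s i * p s j * Real.exp (-|q s i - q s j|)) 0 t := by
  set E : ι → ι → ℝ := fun i j => Real.exp (-|q t i - q t j|)
  set A : ι → ι → ℝ := fun i j => Real.sign (q t i - q t j) * E i j
  set dq : ι → ℝ := fun i => ∑ j, p t j * E i j
  set dp : ι → ℝ := fun i => ∑ j, p t i * p t j * A i j
  have hp' : ∀ i, HasDerivAt (fun s => p s i) (dp i) t := fun i => by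
    simpa only [dp, A, mul_assoc] using hp i
  have hE : ∀ i j, E j i = E i j := fun i j => by simp only [E, abs_sub_comm]
  have hA : ∀ i j, A j i = -A i j := fun i j => by
    simp only [A, hE i j]
    rw [← neg_sub (q t i) (q t j), Real.sign_neg, neg_mul]
  have hkernel : ∀ i j, HasDerivAt (fun s => Real.exp (-|q s i - q s j|))
      (-(A i j * (dq i - dq j))) t := by
    intro i j
    rcases eq_or_ne i j with rfl | hij
    · simpa [A] using hasDerivAt_const t (1 : ℝ)
    · exact (hq i).exp_neg_abs_sub (hq j) (hdistinct hij)
  have hterm : ∀ i j, HasDerivAt (fun s => p s i * p s j * Real.exp (-|q s i - q s j|))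
      ((dp i * p t j + p t i * dp j) * E i j - p t i * p t j * A i j * (dq i - dq j)) t :=
    fun i j => (((hp' i).fun_mul (hp' j)).fun_mul (hkernel i j)).congr_deriv (by ring)
  refine (HasDerivAt.fun_sum fun i _ => HasDerivAt.fun_sum fun j _ => hterm i j).congr_deriv ?_
  simp only [sum_sub_distrib]
  rw [sum_sum_mul_add_mul_of_symm _ _ _ hE, sum_sum_mul_sub_of_antisymm _ _ _ hA]
  exact sub_self _

end Multipeakon

theorem multipeakon_hamiltonian_conserved (N : ℕ)
    (p q : ℝ → Fin N → ℝ) (a b : ℝ)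
    (hq : ∀ i, ∀ t ∈ Set.Icc a b, HasDerivAt (fun s => q s i)
      (∑ j, p t j * Real.exp (-|q t i - q t j|)) t)
    (hp : ∀ i, ∀ t ∈ Set.Icc a b, HasDerivAt (fun s => p s i)
      (∑ j ∈ Finset.univ.filter (· ≠ i),
        p t i * p t j * Real.sign (q t i - q t j) *
          Real.exp (-|q t i - q t j|)) t)
    (hdistinct : ∀ t ∈ Set.Icc a b, ∀ i j, i ≠ j → q t i ≠ q t j) :
    ∀ t ∈ Set.Icc a b,
      (1 / 2) * ∑ i, ∑ j, p t i * p t j * Real.exp (-|q t i - q t j|) =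
      (1 / 2) * ∑ i, ∑ j, p a i * p a j * Real.exp (-|q a i - q a j|) := by
  have hderiv : ∀ t ∈ Set.Icc a b,
      HasDerivAt (fun s => ∑ i, ∑ j, p s i * p s j * Real.exp (-|q s i - q s j|)) 0 t := by
    intro t ht
    refine Multipeakon.hasDerivAt_hamiltonian_eq_zero (hq · t ht) (fun i => ?_)
      (hdistinct t ht)
    rw [← sum_filter_of_ne (p := (· ≠ i)) fun j _ hj => ?_]
    · exact hp i t ht
    · rintro rfl
      simp at hj
  intro t ht
  rw [constant_of_has_deriv_right_zero (fun s hs => (hderiv s hs).continuousAt.continuousWithinAt)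
    (fun s hs => (hderiv s (Set.mem_Icc_of_Ico hs)).hasDerivWithinAt) t ht]
end
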